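/- arXiv:1307.5528 — 7 statements merged into one kernel-verified Lean document; each statement's English description precedes it below -/
import Mathlib

section
/- Let p and q be projections in a *-ring. If pq is Moore-Penrose invertible, then pqp is Moore-Penrose invertible with (pqp)† = ((pq)†)*(pq)†, and pqp(pqp)†pq = pq. -/
variable {R : Type*} [Ring R] [StarRing R]

/-- `b` is a Moore-Penrose inverse of `a`. -/
def IsMP (a b : R) : Prop :=
  a * b * a = a ∧ b * a * b = b ∧ star (a * b) = a * b ∧ star (b * a) = b * a

/-- `p` is a projection: self-adjoint idempotent. -/
def IsProj (p : R) : Prop := p * p = p ∧ star p = p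

/-- The right ideal `aR`. -/
def rid (a : R) : Set R := {x | ∃ r, x = a * r}

/-- Elementwise sum of two subsets. -/
def sid (A B : Set R) : Set R := {z | ∃ x ∈ A, ∃ y ∈ B, z = x + y}

/-!
Writing `a = p * q`, we have `p * q * p = a * star a`. Whenever `c` is a Moore-Penrose inverse
of `a`, both `(a * star a) * (star c * c)` and `(star c * c) * (a * star a)` equal the
projection `a * c`, which makes `star c * c` a Moore-Penrose inverse of `a * star a`;
and then `a * star a * (star c * c) * a = a * c * a = a`.
-/

namespace IsMP
variable {a c : R}

lemma mul_star_self_mul_star_mul (h : IsMP a c) : a * star a * (star c * c) = a * c :=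
  calc a * star a * (star c * c) = a * star (c * a) * c := by simp only [star_mul, mul_assoc]
    _ = a * c := by rw [h.2.2.2, ← mul_assoc, h.1]

lemma star_mul_mul_mul_star_self (h : IsMP a c) : star c * c * (a * star a) = a * c :=
  calc star c * c * (a * star a) = star c * star (c * a) * star a := by
        rw [h.2.2.2]; simp only [mul_assoc]
    _ = star (a * c) * star (a * c) := by simp only [star_mul, mul_assoc]
    _ = a * c := by rw [h.2.2.1, ← mul_assoc, h.1]

lemma mul_star_self (h : IsMP a c) : IsMP (a * star a) (star c * c) := by
  refine ⟨?_, ?_, ?_, ?_⟩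
  · rw [h.mul_star_self_mul_star_mul, ← mul_assoc, h.1]
  · rw [h.star_mul_mul_mul_star_self]
    calc a * c * (star c * c) = star (c * a * c) * c := by
          rw [← h.2.2.1]; simp only [star_mul, mul_assoc]
      _ = star c * c := by rw [h.2.1]
  · rw [h.mul_star_self_mul_star_mul, h.2.2.1]
  · rw [h.star_mul_mul_mul_star_self, h.2.2.1]

end IsMP

lemma mul_star_of_isProj {p q : R} (hp : star p = p) (hq : IsProj q) :
    p * q * star (p * q) = p * q * p := by
  rw [star_mul, hp, hq.2, mul_assoc, ← mul_assoc q, hq.1, mul_assoc]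

theorem stmt6 (p q c : R) (hp : IsProj p) (hq : IsProj q)
    (hc : IsMP (p * q) c) :
    IsMP (p * q * p) (star c * c) ∧
    (p * q * p) * (star c * c) * (p * q) = p * q := by
  rw [← mul_star_of_isProj hp.2 hq]
  exact ⟨hc.mul_star_self, by rw [hc.mul_star_self_mul_star_mul, hc.1]⟩
end

section
/- Let p and q be projections in a *-ring with (1-p)q Moore-Penrose invertible. Then x = p + (1-p)((1-p)q)† is a projection and xR = pR + qR (equality of right ideals). -/
variable {R : Type*} [Ring R] [StarRing R]

/-!
Write `a = (1 - p) q`, so `c = a†`. Since `(1 - p) a = a = a q`, the Moore-Penrose identities give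
`c (1 - p) = c` and `q c = c`; hence `(1 - p) c = a c`, which is the range projection of `a`, and it is
orthogonal to `p`. So `x = p + a c` is a projection. Finally `x p = p`, `x q = p q + a c a = q`, and
`x = p (1 - q c) + q c`, which gives both inclusions of right ideals.
-/

theorem isProj_iff_isStarProjection {p : R} : IsProj p ↔ IsStarProjection p :=
  isStarProjection_iff'.symm

namespace IsMP

variable {a c e : R}

theorem eq_mul_star_mul_star (h : IsMP a c) : c = c * star c * star a := by
  obtain ⟨-, hcac, hac, -⟩ := h
  calc c = c * (a * c) := by rw [← mul_assoc, hcac]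
    _ = c * star c * star a := by rw [← hac, star_mul, mul_assoc]

theorem eq_star_mul_star_mul (h : IsMP a c) : c = star a * star c * c := by
  obtain ⟨-, hcac, -, hca⟩ := h
  calc c = c * a * c := hcac.symm
    _ = star a * star c * c := by rw [← hca, star_mul]

theorem mul_eq_self_of_mul_left_eq_self (h : IsMP a c) (he : IsSelfAdjoint e)
    (hea : e * a = a) : c * e = c := by
  have hae : star a * e = star a := by rw [← he.star_eq, ← star_mul, hea]
  rw [h.eq_mul_star_mul_star, mul_assoc, hae]

theorem mul_eq_self_of_mul_right_eq_self (h : IsMP a c) (he : IsSelfAdjoint e)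
    (hae : a * e = a) : e * c = c := by
  have hea : e * star a = star a := by rw [← he.star_eq, ← star_mul, hae]
  rw [h.eq_star_mul_star_mul, mul_assoc, ← mul_assoc e, hea]

theorem isStarProjection_mul (h : IsMP a c) : IsStarProjection (a * c) :=
  ⟨by rw [IsIdempotentElem, ← mul_assoc, h.1], h.2.2.1⟩

end IsMP

theorem rid_eq_sid_rid {R : Type*} [Ring R] {x p q u v : R} (hxp : x * p = p) (hxq : x * q = q)
    (hx : x = p * u + q * v) : rid x = sid (rid p) (rid q) := by
  ext z
  constructor
  · rintro ⟨r, rfl⟩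
    exact ⟨p * (u * r), ⟨_, rfl⟩, q * (v * r), ⟨_, rfl⟩, by rw [hx]; noncomm_ring⟩
  · rintro ⟨_, ⟨s, rfl⟩, _, ⟨t, rfl⟩, rfl⟩
    exact ⟨p * s + q * t, by rw [mul_add, ← mul_assoc, ← mul_assoc, hxp, hxq]⟩

theorem stmt8 (p q c : R) (hp : IsProj p) (hq : IsProj q)
    (hc : IsMP ((1 - p) * q) c) :
    IsProj (p + (1 - p) * c) ∧ rid (p + (1 - p) * c) = sid (rid p) (rid q) := by
  rw [isProj_iff_isStarProjection] at hp hq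
  have hce : c * (1 - p) = c := hc.mul_eq_self_of_mul_left_eq_self hp.one_sub.isSelfAdjoint
    (by rw [← mul_assoc, hp.one_sub.isIdempotentElem.eq])
  have hqc : q * c = c := hc.mul_eq_self_of_mul_right_eq_self hq.isSelfAdjoint
    (by rw [mul_assoc, hq.isIdempotentElem.eq])
  have hcp : c * p = 0 := by rw [← hce, mul_assoc, hp.one_sub_mul_self, mul_zero]
  have hac : (1 - p) * c = (1 - p) * q * c := by rw [mul_assoc, hqc]
  rw [hac, isProj_iff_isStarProjection]
  refine ⟨hp.add hc.isStarProjection_mul ?_, rid_eq_sid_rid (u := 1 - q * c) (v := c) ?_ ?_ ?_⟩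
  · rw [← mul_assoc, ← mul_assoc, hp.mul_one_sub_self, zero_mul, zero_mul]
  · rw [add_mul, mul_assoc _ c, hcp, mul_zero, add_zero, hp.isIdempotentElem.eq]
  · -- `c q = c (1 - p) q = c a`, so `a c q = a c a = a`
    rw [add_mul, mul_assoc _ c, ← hce, mul_assoc c, ← mul_assoc, hc.1]
    noncomm_ring
  · noncomm_ring
end

section
/- Let p and q be projections in a *-ring with p(1-q) Moore-Penrose invertible. Then y = p - p(p(1-q))† is a projection and yR = pR ∩ qR. -/
/-!
Write `a = p(1-q)` and `e = a a†`, a projection onto `aR`. Because `a† = a*(a†)*a†` has range in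
`a*R = (1-q)pR`, we get `q a† = 0`, hence `p a† = (a + pq) a† = e` and `y = p - e`. As `e ≤ p`,
`y` is a projection. It lies under `q` since `(1-q)p = a*` and `a* e = a*`; and any `x` fixed by
both `p` and `q` is killed by `a* = (1-q)p`, hence by `e = e*`, so `y x = x`.
-/

variable {R : Type*} [Ring R] [StarRing R]

theorem mem_rid_iff_of_mul_self {S : Type*} [Ring S] {p x : S} (hp : p * p = p) : x ∈ rid p ↔ p * x = x := by
  constructor
  · rintro ⟨r, rfl⟩
    rw [← mul_assoc, hp]
  · intro hx
    exact ⟨x, hx.symm⟩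

theorem rid_eq_inter_of_fixed {S : Type*} [Ring S] {y p q : S} (hy : y * y = y) (hp : p * p = p) (hq : q * q = q)
    (hpy : p * y = y) (hqy : q * y = y) (hfix : ∀ x, p * x = x → q * x = x → y * x = x) :
    rid y = rid p ∩ rid q := by
  ext x
  simp only [Set.mem_inter_iff, mem_rid_iff_of_mul_self hy, mem_rid_iff_of_mul_self hp,
    mem_rid_iff_of_mul_self hq]
  constructor
  · rintro hx
    exact ⟨by rw [← hx, ← mul_assoc, hpy], by rw [← hx, ← mul_assoc, hqy]⟩
  · rintro ⟨hpx, hqx⟩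
    exact hfix x hpx hqx

theorem IsProj.sub {p e : R} (hp : IsProj p) (he : IsProj e) (hpe : p * e = e) :
    IsProj (p - e) := by
  have hep : e * p = e := by
    simpa only [star_mul, hp.2, he.2] using congrArg star hpe
  refine ⟨?_, by rw [star_sub, hp.2, he.2]⟩
  simp only [sub_mul, mul_sub, hp.1, he.1, hpe, hep]
  abel

namespace IsMP

variable {a b : R}

theorem isProj_mul (h : IsMP a b) : IsProj (a * b) :=
  ⟨by rw [← mul_assoc, h.1], h.2.2.1⟩

theorem star_mul_mul_self (h : IsMP a b) : star a * (a * b) = star a := by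
  conv_lhs => rw [← h.2.2.1]
  rw [← star_mul, h.1]

theorem eq_star_mul (h : IsMP a b) : b = star a * (star b * b) := by
  conv_lhs => rw [← h.2.1, ← h.2.2.2]
  rw [star_mul, mul_assoc]

end IsMP

theorem stmt9 (p q c : R) (hp : IsProj p) (hq : IsProj q)
    (hc : IsMP (p * (1 - q)) c) :
    IsProj (p - p * c) ∧ rid (p - p * c) = rid p ∩ rid q := by
  set a := p * (1 - q) with ha
  have hsa : star a = (1 - q) * p := by rw [ha, star_mul, star_sub, star_one, hq.2, hp.2]
  have hpa : p * a = a := by rw [ha, ← mul_assoc, hp.1]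
  have hqa : q * star a = 0 := by
    rw [hsa, ← mul_assoc, mul_sub, mul_one, hq.1, sub_self, zero_mul]
  have hqc : q * c = 0 := by rw [hc.eq_star_mul, ← mul_assoc, hqa, zero_mul]
  have hpc : p * c = a * c := by
    rw [ha, mul_sub, mul_one, sub_mul, mul_assoc p q c, hqc, mul_zero, sub_zero]
  have hpe : p * (a * c) = a * c := by rw [← mul_assoc, hpa]
  have hy : IsProj (p - a * c) := hp.sub hc.isProj_mul hpe
  rw [hpc]
  refine ⟨hy, rid_eq_inter_of_fixed hy.1 hp.1 hq.1 (by rw [mul_sub, hp.1, hpe]) ?_ ?_⟩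
  · refine (sub_eq_zero.mp ?_).symm
    rw [← one_sub_mul, mul_sub, ← hpe, ← mul_assoc, ← hsa, hc.star_mul_mul_self, sub_self]
  · intro x hpx hqx
    have hax : star a * x = 0 := by rw [hsa, mul_assoc, hpx, sub_mul, one_mul, hqx, sub_self]
    rw [sub_mul, hpx, ← hc.isProj_mul.2, star_mul, mul_assoc, hax, mul_zero, sub_zero]
end

section
/- Let p and q be projections in a *-ring with (1-p)q Moore-Penrose invertible. Then pR + qR = R if and only if (1-p)q(1-p)R = (1-p)R. -/
/-!
With `a = (1 - p) q`, the decomposition `1 = p r + q s` is equivalent to `1 - p ∈ aR`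
(multiply by `1 - p`, resp. write `1 = p (1 - q u) + q u`). Since `a` is Moore-Penrose
invertible, `a = a a* (a†)*`, so `aR = a a* R`, and `a a* = (1 - p) q (1 - p)`.
-/

variable {R : Type*} [Ring R] [StarRing R]

section Ring

variable {S : Type*} [Ring S]

theorem self_mem_rid (a : S) : a ∈ rid a := ⟨1, (mul_one a).symm⟩

theorem rid_subset_rid_of_mem {a b : S} (h : a ∈ rid b) : rid a ⊆ rid b := by
  obtain ⟨s, rfl⟩ := h
  rintro _ ⟨r, rfl⟩
  exact ⟨s * r, mul_assoc b s r⟩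

theorem rid_mul_eq_rid_iff (a x : S) : rid (a * x) = rid a ↔ a ∈ rid (a * x) := by
  refine ⟨fun h => h ▸ self_mem_rid a, fun h => ?_⟩
  exact (rid_subset_rid_of_mem ⟨x, rfl⟩).antisymm (rid_subset_rid_of_mem h)

theorem sid_rid_eq_univ_iff {p : S} (hp : p * p = p) (q : S) :
    sid (rid p) (rid q) = Set.univ ↔ 1 - p ∈ rid ((1 - p) * q) := by
  constructor
  · intro h
    obtain ⟨_, ⟨r, rfl⟩, _, ⟨s, rfl⟩, hone⟩ : (1 : S) ∈ sid (rid p) (rid q) := h ▸ trivial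
    refine ⟨s, ?_⟩
    calc 1 - p = (1 - p) * (p * r + q * s) := by rw [← hone, mul_one]
      _ = (p - p * p) * r + (1 - p) * q * s := by noncomm_ring
      _ = (1 - p) * q * s := by rw [hp, sub_self, zero_mul, zero_add]
  · rintro ⟨u, hu⟩
    refine Set.eq_univ_of_forall fun z => ⟨_, ⟨(1 - q * u) * z, rfl⟩, _, ⟨u * z, rfl⟩, ?_⟩
    calc z = (p + (1 - p) * q * u) * z := by rw [← hu, add_sub_cancel, one_mul]
      _ = p * ((1 - q * u) * z) + q * (u * z) := by noncomm_ring

end Ring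

theorem IsMP.eq_mul_star_mul_star_s10 {a c : R} (h : IsMP a c) : a = a * star a * star c := by
  obtain ⟨haca, -, -, hca⟩ := h
  calc a = a * (c * a) := by rw [← mul_assoc, haca]
    _ = a * star a * star c := by rw [← hca, star_mul, mul_assoc]

theorem IsMP.rid_mul_star {a c : R} (h : IsMP a c) : rid (a * star a) = rid a :=
  (rid_mul_eq_rid_iff a (star a)).2 ⟨star c, h.eq_mul_star_mul_star_s10⟩

theorem IsProj.one_sub_mul_mul_star {p q : R} (hp : IsProj p) (hq : IsProj q) :
    (1 - p) * q * star ((1 - p) * q) = (1 - p) * q * (1 - p) := by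
  rw [star_mul, star_sub, star_one, hp.2, hq.2, ← mul_assoc, mul_assoc _ q q, hq.1]

theorem stmt10 (p q : R) (hp : IsProj p) (hq : IsProj q)
    (hmp : ∃ c, IsMP ((1 - p) * q) c) :
    sid (rid p) (rid q) = Set.univ ↔ rid ((1 - p) * q * (1 - p)) = rid (1 - p) := by
  obtain ⟨c, hc⟩ := hmp
  have hrid : rid ((1 - p) * q * (1 - p)) = rid ((1 - p) * q) := by
    rw [← hp.one_sub_mul_mul_star hq, hc.rid_mul_star]
  rw [sid_rid_eq_univ_iff hp.1, ← hrid, mul_assoc, rid_mul_eq_rid_iff]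
end

section
/- Let p and q be projections in a *-reducing ring R such that 1 - pq is Moore-Penrose invertible. Then ((1-q)p)† = (1-pq)†p(1-q), and this element is an idempotent. -/
/-!
Write `u = 1 - pq`, `s = 1 - u†u` and `r = 1 - uu†`. Since `us = 0` and `ru = 0`, the projections
`s` and `r` satisfy `pqs = s` and `qpr = r`; in a *-reducing ring this forces `s ≤ p, q` and `r ≤ p`,
the last giving `(1 - p)u† = 1 - p`. With these facts the four Penrose equations for
`a = (1 - q)p` and `e = u†a*` are direct computations (`ea = p - s`), and `e = pe`, `ep = ea`
give `e² = eae = e`.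
-/

variable {R : Type*} [Ring R] [StarRing R]

variable (R) in
def IsStarReducing : Prop := ∀ a : R, star a * a = 0 → a = 0

namespace IsMP

variable {a b : R}

theorem unique {x y : R} (hx : IsMP a x) (hy : IsMP a y) : x = y := by
  obtain ⟨hx1, hx2, hx3, hx4⟩ := hx
  obtain ⟨hy1, hy2, hy3, hy4⟩ := hy
  have hx' : x = x * a * y := calc
    x = x * star (a * x) := by rw [hx3, ← mul_assoc, hx2]
    _ = x * star (a * y * a * x) := by rw [hy1]
    _ = x * star (a * x) * star (a * y) := by simp only [star_mul, mul_assoc]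
    _ = x * a * y := by rw [hx3, hy3, ← mul_assoc x, hx2, mul_assoc]
  have hy' : y = x * a * y := calc
    y = star (y * a) * y := by rw [hy4, hy2]
    _ = star (y * (a * x * a)) * y := by rw [hx1]
    _ = star (x * a) * star (y * a) * y := by simp only [star_mul, mul_assoc]
    _ = x * a * y := by rw [hx4, hy4, mul_assoc (x * a), hy2]
  exact hx'.trans hy'.symm

theorem star_one_sub_inv_mul (h : IsMP a b) : star (1 - b * a) = 1 - b * a := by
  rw [star_sub, star_one, h.2.2.2]

theorem star_one_sub_mul_inv (h : IsMP a b) : star (1 - a * b) = 1 - a * b := by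
  rw [star_sub, star_one, h.2.2.1]

theorem mul_one_sub_inv_mul (h : IsMP a b) : a * (1 - b * a) = 0 := by
  linear_combination (norm := noncomm_ring) -h.1

theorem one_sub_mul_inv_mul (h : IsMP a b) : (1 - a * b) * a = 0 := by
  linear_combination (norm := noncomm_ring) -h.1

theorem one_sub_inv_mul_mul_inv (h : IsMP a b) : (1 - b * a) * b = 0 := by
  linear_combination (norm := noncomm_ring) -h.2.1

theorem of_mul_star_eq {e c : R} (h1 : a * e * a = a) (h2 : e * a * e = e)
    (h4 : star (e * a) = e * a) (he : e = c * star a) : IsMP a e := by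
  refine ⟨h1, h2, ?_, h4⟩
  have hmul : a * e * star (a * e) = star (a * e) := by
    subst he
    rw [star_mul, star_mul, star_star]
    linear_combination (norm := noncomm_ring) h1 * (star c * star a)
  have hsa := IsSelfAdjoint.mul_star_self (a * e)
  rw [hmul, IsSelfAdjoint, star_star] at hsa
  exact hsa.symm

end IsMP

namespace IsStarReducing

variable {p q : R}

theorem proj_mul_eq_self_of_proj_mul_proj_mul_eq_self (hR : IsStarReducing R) {s : R}
    (hp : IsProj p) (hq : IsProj q) (hs : star s = s) (h : p * q * s = s) :
    p * s = s ∧ q * s = s := by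
  obtain ⟨hp2, hp_star⟩ := hp
  obtain ⟨hq2, hq_star⟩ := hq
  have hps : p * s = s := by
    rw [← h, ← mul_assoc, ← mul_assoc, hp2]
  have hsp : s * p = s := by
    simpa only [star_mul, hp_star, hs] using congrArg star hps
  have hsqp : s * q * p = s := by
    simpa only [star_mul, hp_star, hq_star, hs, mul_assoc] using congrArg star h
  have hqs : (1 - q) * s = 0 := hR _ <| by
    rw [star_mul, star_sub, star_one, hq_star, hs]
    linear_combination (norm := noncomm_ring)
      s * hq2 * s - s * (1 - q) * h + hsp * (q * s) - hsqp * (q * s)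
  exact ⟨hps, by linear_combination (norm := noncomm_ring) -hqs⟩

variable {c : R} (hR : IsStarReducing R) (hp : IsProj p) (hq : IsProj q)
  (hc : IsMP (1 - p * q) c)
include hR hp hq hc

theorem proj_mul_one_sub_inv_mul :
    p * (1 - c * (1 - p * q)) = 1 - c * (1 - p * q) ∧
      q * (1 - c * (1 - p * q)) = 1 - c * (1 - p * q) :=
  hR.proj_mul_eq_self_of_proj_mul_proj_mul_eq_self hp hq hc.star_one_sub_inv_mul <| by
    linear_combination (norm := noncomm_ring) -hc.mul_one_sub_inv_mul

theorem one_sub_proj_mul_inv : (1 - p) * c = 1 - p := by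
  have hr : q * p * (1 - (1 - p * q) * c) = 1 - (1 - p * q) * c := by
    have h := congrArg star hc.one_sub_mul_inv_mul
    rw [star_mul, hc.star_one_sub_mul_inv, star_sub, star_one, star_mul, hp.2, hq.2,
      star_zero] at h
    linear_combination (norm := noncomm_ring) -h
  have hpr := (hR.proj_mul_eq_self_of_proj_mul_proj_mul_eq_self hq hp
    hc.star_one_sub_mul_inv hr).2
  linear_combination (norm := noncomm_ring) hpr - hp.1 * (q * c)

theorem proj_mul_inv_mul : p * (c * (p * (1 - q))) = c * (p * (1 - q)) := by
  linear_combination (norm := noncomm_ring)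
    hp.1 * (1 - q) - hR.one_sub_proj_mul_inv hp hq hc * (p * (1 - q))

theorem inv_mul_mul_one_sub_mul :
    c * (p * (1 - q)) * ((1 - q) * p) = p - (1 - c * (1 - p * q)) := by
  have hsp : (1 - c * (1 - p * q)) * p = 1 - c * (1 - p * q) := by
    simpa only [star_mul, hp.2, hc.star_one_sub_inv_mul] using
      congrArg star (hR.proj_mul_one_sub_inv_mul hp hq hc).1
  linear_combination (norm := noncomm_ring) c * p * hq.1 * p + c * hp.1 - hsp

theorem isMP_one_sub_mul : IsMP ((1 - q) * p) (c * (p * (1 - q))) := by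
  obtain ⟨hps, hqs⟩ := hR.proj_mul_one_sub_inv_mul hp hq hc
  have hea := hR.inv_mul_mul_one_sub_mul hp hq hc
  refine IsMP.of_mul_star_eq (c := c) ?_ ?_ ?_ ?_
  · rw [mul_assoc, hea]
    linear_combination (norm := noncomm_ring) (1 - q) * hp.1 - (1 - q) * hps + hqs
  · rw [hea]
    linear_combination (norm := noncomm_ring)
      hR.proj_mul_inv_mul hp hq hc - hc.one_sub_inv_mul_mul_inv * (p * (1 - q))
  · rw [hea, star_sub, hp.2, hc.star_one_sub_inv_mul]
  · rw [star_mul, star_sub, star_one, hp.2, hq.2]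

theorem isIdempotentElem_inv_mul_mul_one_sub : IsIdempotentElem (c * (p * (1 - q))) := by
  have hep : c * (p * (1 - q)) * p = c * (p * (1 - q)) * ((1 - q) * p) := by
    linear_combination (norm := noncomm_ring) -(c * p * hq.1 * p)
  show c * (p * (1 - q)) * (c * (p * (1 - q))) = c * (p * (1 - q))
  calc c * (p * (1 - q)) * (c * (p * (1 - q)))
      = c * (p * (1 - q)) * p * (c * (p * (1 - q))) := by
        rw [mul_assoc _ p, hR.proj_mul_inv_mul hp hq hc]
    _ = c * (p * (1 - q)) := by rw [hep, (hR.isMP_one_sub_mul hp hq hc).2.1]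

end IsStarReducing

theorem stmt12 (hred : ∀ a : R, star a * a = 0 → a = 0)
    (p q c d : R) (hp : IsProj p) (hq : IsProj q)
    (hc : IsMP (1 - p * q) c) (hd : IsMP ((1 - q) * p) d) :
    d = c * (p * (1 - q)) ∧ d * d = d := by
  have hR : IsStarReducing R := hred
  obtain rfl := hd.unique (hR.isMP_one_sub_mul hp hq hc)
  exact ⟨rfl, hR.isIdempotentElem_inv_mul_mul_one_sub hp hq hc⟩
end

section
/- Let p and q be projections in a *-reducing ring R such that 1 - pq is Moore-Penrose invertible. Then ((1-q)p)† R = pR ∩ ((1-p)R + (1-q)R). -/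
/-!
A Moore–Penrose inverse `b` of `a` generates the same right ideal as `a⋆`, since
`b = a⋆ b⋆ b` and `a⋆ = b a a⋆`. With `a = (1 - q) p` this gives `d R = p (1 - q) R`.
For an idempotent `p`, the right ideal `p (1 - e) R` is `p R ∩ ((1 - p) R + (1 - e) R)`:
left multiplication by `p` fixes `p R` and kills `(1 - p) R`.
-/

variable {R : Type*} [Ring R] [StarRing R]

section

variable {S : Type*} [Ring S]

lemma rid_subset_rid_of_eq_mul {a b r : S} (h : a = b * r) : rid a ⊆ rid b := by
  rintro x ⟨s, rfl⟩
  exact ⟨r * s, by rw [h, mul_assoc]⟩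

lemma rid_mul_one_sub_eq_inter {p : S} (hp : IsIdempotentElem p) (e : S) :
    rid (p * (1 - e)) = rid p ∩ sid (rid (1 - p)) (rid (1 - e)) := by
  ext z
  constructor
  · rintro ⟨r, rfl⟩
    refine ⟨⟨(1 - e) * r, mul_assoc _ _ _⟩, (1 - p) * -((1 - e) * r), ⟨_, rfl⟩,
      (1 - e) * r, ⟨_, rfl⟩, by noncomm_ring⟩
  · rintro ⟨⟨s, rfl⟩, x, ⟨u, rfl⟩, y, ⟨v, rfl⟩, hz⟩
    have hp_one_sub : p * (1 - p) = 0 := by rw [mul_sub, mul_one, hp.eq, sub_self]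
    refine ⟨v, ?_⟩
    calc p * s = p * (p * s) := by rw [← mul_assoc, hp.eq]
      _ = p * (1 - e) * v := by
        rw [hz, mul_add, ← mul_assoc, hp_one_sub, zero_mul, zero_add, mul_assoc]

end

lemma IsMP.rid_eq_rid_star {a b : R} (h : IsMP a b) : rid b = rid (star a) := by
  obtain ⟨haba, hbab, -, hba⟩ := h
  apply Set.Subset.antisymm
  · refine rid_subset_rid_of_eq_mul (r := star b * b) ?_
    calc b = star (b * a) * b := by rw [hba, hbab]
      _ = star a * (star b * b) := by rw [star_mul, mul_assoc]
  · refine rid_subset_rid_of_eq_mul (r := a * star a) ?_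
    calc star a = star (a * (b * a)) := by rw [← mul_assoc, haba]
      _ = star (b * a) * star a := star_mul _ _
      _ = b * (a * star a) := by rw [hba, mul_assoc]

theorem stmt13_general
    (p q d : R) (hp : IsProj p) (hq : IsProj q)
    (hd : IsMP ((1 - q) * p) d) :
    rid d = rid p ∩ sid (rid (1 - p)) (rid (1 - q)) := by
  obtain ⟨hpp, hps⟩ := hp
  have hstar : star ((1 - q) * p) = p * (1 - q) := by
    rw [star_mul, star_sub, star_one, hps, hq.2]
  rw [hd.rid_eq_rid_star, hstar]
  exact rid_mul_one_sub_eq_inter hpp q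

theorem stmt13 (hred : ∀ a : R, star a * a = 0 → a = 0)
    (p q c d : R) (hp : IsProj p) (hq : IsProj q)
    (hc : IsMP (1 - p * q) c) (hd : IsMP ((1 - q) * p) d) :
    rid d = rid p ∩ sid (rid (1 - p)) (rid (1 - q)) :=
  stmt13_general p q d hp hq hd
end

section
/- Let p and q be projections in a *-reducing ring R with 1 - pq Moore-Penrose invertible. Then pR ∩ qR = {0} if and only if 1 - pq is invertible. -/
variable {R : Type*} [Ring R] [StarRing R]

/-! The kernel of `1 - pq` consists of the common fixed points of `p` and `q`: if `pqx = x` then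
`px = x`, hence `x*x = x*pqx = x*qx`, and this forces `(x - qx)*(x - qx) = 0` in a *-reducing
ring. So `pR ∩ qR = 0` makes `1 - pq` left regular, and, applied to `q, p` and `x*`, right
regular. A regular element with an inner inverse `aca = a` is a unit with inverse `c`. -/

theorem IsRegular.isUnit_of_mul_mul_eq_self {M : Type*} [Monoid M] {a b : M}
    (ha : IsRegular a) (h : a * b * a = a) : IsUnit a := by
  have hba : b * a = 1 := ha.left (by rw [← mul_assoc, h, mul_one] : a * (b * a) = a * 1)
  have hab : a * b = 1 := ha.right (by rw [h, one_mul] : a * b * a = 1 * a)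
  exact ⟨⟨a, b, hab, hba⟩, rfl⟩

theorem IsProj.mem_rid_iff {p x : R} (hp : IsProj p) : x ∈ rid p ↔ p * x = x :=
  ⟨fun ⟨r, hr⟩ => by rw [hr, ← mul_assoc, hp.1], fun h => ⟨x, h.symm⟩⟩

theorem rid_inter_rid_eq_zero_iff {p q : R} (hp : IsProj p) (hq : IsProj q) :
    rid p ∩ rid q = {0} ↔ ∀ x, p * x = x → q * x = x → x = 0 := by
  simp only [Set.eq_singleton_iff_unique_mem, Set.mem_inter_iff, hp.mem_rid_iff, hq.mem_rid_iff,
    mul_zero, true_and, and_imp]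

theorem IsProj.mul_eq_self_of_star_mul_mul_eq (hred : ∀ a : R, star a * a = 0 → a = 0)
    {q x : R} (hq : IsProj q) (h : star x * (q * x) = star x * x) : q * x = x := by
  have hsq : star (x - q * x) * (x - q * x) =
      star x * x - star x * (q * x) + star x * ((q * q - q) * x) := by
    rw [star_sub, star_mul, hq.2]; noncomm_ring
  rw [hq.1, sub_self, zero_mul, mul_zero, add_zero, h, sub_self] at hsq
  exact (sub_eq_zero.mp (hred _ hsq)).symm

theorem IsProj.mul_eq_self_of_one_sub_mul_mul_eq_zero (hred : ∀ a : R, star a * a = 0 → a = 0)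
    {p q x : R} (hp : IsProj p) (hq : IsProj q) (h : (1 - p * q) * x = 0) :
    p * x = x ∧ q * x = x := by
  have hpq : p * (q * x) = x := by
    rw [sub_mul, one_mul, sub_eq_zero, mul_assoc] at h
    exact h.symm
  have hp' : p * x = x := by rw [← hpq, ← mul_assoc, hp.1]
  refine ⟨hp', hq.mul_eq_self_of_star_mul_mul_eq hred ?_⟩
  calc star x * (q * x) = star (p * x) * (q * x) := by rw [hp']
    _ = star x * x := by rw [star_mul, hp.2, mul_assoc, hpq]

theorem isLeftRegular_one_sub_mul (hred : ∀ a : R, star a * a = 0 → a = 0)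
    {p q : R} (hp : IsProj p) (hq : IsProj q) (h : rid p ∩ rid q = {0}) :
    IsLeftRegular (1 - p * q) := by
  refine isLeftRegular_iff_right_eq_zero_of_mul.mpr fun x hx => ?_
  obtain ⟨hpx, hqx⟩ := IsProj.mul_eq_self_of_one_sub_mul_mul_eq_zero hred hp hq hx
  exact (rid_inter_rid_eq_zero_iff hp hq).mp h x hpx hqx

theorem isRegular_one_sub_mul (hred : ∀ a : R, star a * a = 0 → a = 0)
    {p q : R} (hp : IsProj p) (hq : IsProj q) (h : rid p ∩ rid q = {0}) :
    IsRegular (1 - p * q) := by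
  refine ⟨isLeftRegular_one_sub_mul hred hp hq h,
    isRightRegular_iff_left_eq_zero_of_mul.mpr fun x hx => ?_⟩
  have hx' : (1 - q * p) * star x = 0 := by
    simpa only [star_mul, star_sub, star_one, hp.2, hq.2, star_zero] using congrArg star hx
  have hqp := isLeftRegular_one_sub_mul hred hq hp (Set.inter_comm (rid p) (rid q) ▸ h)
  exact star_eq_zero.mp (hqp (hx'.trans (mul_zero _).symm))

theorem stmt16 (hred : ∀ a : R, star a * a = 0 → a = 0)
    (p q c : R) (hp : IsProj p) (hq : IsProj q)
    (hc : IsMP (1 - p * q) c) :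
    rid p ∩ rid q = {0} ↔ IsUnit (1 - p * q) := by
  refine ⟨fun h => (isRegular_one_sub_mul hred hp hq h).isUnit_of_mul_mul_eq_self hc.1,
    fun hu => (rid_inter_rid_eq_zero_iff hp hq).mpr fun x hpx hqx => ?_⟩
  refine hu.mul_right_eq_zero.mp ?_
  rw [sub_mul, one_mul, mul_assoc, hqx, hpx, sub_self]
end
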